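/- There exists a universal constant c₂ > 0 such that for all integers n, d ≥ 2 and all t > 0, if G_1,…,G_n are i.i.d. standard Gaussian vectors N(0, I_d) in ℝ^d and S = Σ_{1 ≤ i ≠ j ≤ n} ⟨G_i, G_j⟩, then P(|S| ≥ t) ≤ 2 · exp( −c₂ · min( t²/(n²·d), t/n ) ). -/

import Mathlib

open MeasureTheory ProbabilityTheory Real
open scoped RealInnerProductSpace ENNReal NNReal

noncomputable section

/-- The standard Gaussian measure `N(0, I_d)` on `ℝ^d`. -/
def stdGaussian (d : ℕ) : Measure (EuclideanSpace ℝ (Fin d)) :=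
  (Measure.pi fun _ : Fin d => gaussianReal 0 1).map
    (MeasurableEquiv.toLp 2 (Fin d → ℝ))

/-- The uniform probability measure on the unit sphere `S^{d-1} ⊆ ℝ^d`,
viewed as a measure on the ambient space (normalized spherical surface measure). -/
def sphereUniform (d : ℕ) : Measure (EuclideanSpace ℝ (Fin d)) :=
  (((volume : Measure (EuclideanSpace ℝ (Fin d))).toSphere Set.univ)⁻¹) •
    ((volume : Measure (EuclideanSpace ℝ (Fin d))).toSphere).map (Subtype.val)

/-- `t` is the threshold `t_{p,d}`: the probability that the inner product of two
independent uniform points on the sphere is at least `t` equals `p`. -/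
def IsSphereThreshold (d : ℕ) (p t : ℝ) : Prop :=
  ((sphereUniform d).prod (sphereUniform d)) {xy | t ≤ ⟪xy.1, xy.2⟫} = ENNReal.ofReal p

/-- `τ` is the threshold `τ_{p,d}`: the probability that the inner product of two
independent standard Gaussian vectors is at least `τ` equals `p`. -/
def IsGaussThreshold (d : ℕ) (p τ : ℝ) : Prop :=
  ((stdGaussian d).prod (stdGaussian d)) {xy | τ ≤ ⟪xy.1, xy.2⟫} = ENNReal.ofReal p

/-- The clique event: all pairwise inner products are at least the threshold `t`. -/
def cliqueSet (n d : ℕ) (t : ℝ) : Set (Fin n → EuclideanSpace ℝ (Fin d)) :=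
  {X | ∀ i j : Fin n, i < j → t ≤ ⟪X i, X j⟫}

/-- The number of edges of the geometric graph: pairs `i < j` with `⟪X i, X j⟫ ≥ t`. -/
def edgeCount (n d : ℕ) (t : ℝ) (X : Fin n → EuclideanSpace ℝ (Fin d)) : ℕ :=
  Nat.card {ij : Fin n × Fin n // ij.1 < ij.2 ∧ t ≤ ⟪X ij.1, X ij.2⟫}

/-!
Coordinatewise, `S = ∑ₖ ((∑ᵢ Gᵢₖ)² - ∑ᵢ Gᵢₖ²)` is a sum of `d` independent copies of a quadratic
form in a standard Gaussian vector `g ∈ ℝⁿ`. In an orthonormal basis of `ℝⁿ` whose first vector is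
`(1, …, 1)/√n` this form reads `(n - 1) x₀² - ∑_{i ≥ 1} xᵢ²` with independent standard `xᵢ`, so
`𝔼 exp (λ S) = ((1 - 2 (n - 1) λ)^(-1/2) (1 + 2 λ)^(-(n - 1)/2))^d`, which is at most
`exp (4 n² d λ²)` for `|λ| ≤ 1/(8n)` because the terms linear in `λ` cancel. The Chernoff bound
at `λ = min (t/(8 n² d)) (1/(8n))`, applied to `S` and `-S`, gives the claim with `c₂ = 1/16`.
-/

theorem Finset.sum_offDiag_mul_eq {ι R : Type*} [DecidableEq ι] [CommRing R] (s : Finset ι)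
    (f : ι → R) :
    ∑ ij ∈ s.offDiag, f ij.1 * f ij.2 = (∑ i ∈ s, f i) ^ 2 - ∑ i ∈ s, f i ^ 2 := by
  rw [sq, Finset.sum_mul_sum, ← Finset.sum_product', ← Finset.diag_union_offDiag,
    Finset.sum_union (Finset.disjoint_diag_offDiag s), Finset.sum_diag]
  simp only [sq, add_sub_cancel_left]

theorem OrthonormalBasis.exists_apply_eq {ι E : Type*} [Fintype ι] [NormedAddCommGroup E]
    [InnerProductSpace ℝ E] (e : OrthonormalBasis ι ℝ E) (i : ι) {u : E} (hu : ‖u‖ = 1) :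
    ∃ b : OrthonormalBasis ι ℝ E, b i = u :=
  ⟨e.map (Submodule.reflection (ℝ ∙ (e i - u))ᗮ), by
    rw [OrthonormalBasis.map_apply]
    exact Submodule.reflection_sub (by rw [e.norm_eq_one, hu])⟩

theorem lintegral_fintype_prod_eq_prod {ι X : Type*} [Fintype ι] [MeasurableSpace X]
    (μ : ι → Measure X) [∀ i, IsProbabilityMeasure (μ i)]
    (f : ι → X → ℝ≥0∞) (hf : ∀ i, Measurable (f i)) :
    ∫⁻ x, ∏ i, f i (x i) ∂Measure.pi μ = ∏ i, ∫⁻ y, f i y ∂μ i := by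
  rw [lintegral_prod_eq_prod_lintegral_of_indepFun _ _
    (iIndepFun_pi fun i ↦ (hf i).aemeasurable) fun i ↦ (hf i).comp (measurable_pi_apply i)]
  exact Finset.prod_congr rfl fun i _ ↦ (measurePreserving_eval μ i).lintegral_comp (hf i)

theorem MeasureTheory.Measure.pi_pi_map_swap {ι κ X : Type*} [Fintype ι] [Fintype κ]
    [MeasurableSpace X] (μ : Measure X) [IsProbabilityMeasure μ] :
    (Measure.pi fun _ : ι ↦ Measure.pi fun _ : κ ↦ μ).map Function.swap =
      Measure.pi fun _ : κ ↦ Measure.pi fun _ : ι ↦ μ := by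
  simp only [← Measure.infinitePi_eq_pi]
  rw [← Measure.infinitePi_map_curry (fun _ _ ↦ μ), ← Measure.infinitePi_map_curry (fun _ _ ↦ μ),
    Measure.map_map (by fun_prop) (by fun_prop),
    ← Measure.infinitePi_map_piCongrLeft (fun _ ↦ μ) (Equiv.prodComm κ ι),
    Measure.map_map (by fun_prop) (by fun_prop)]
  rfl

theorem lintegral_exp_mul_sq_gaussianReal {a : ℝ} (ha : a < 1 / 2) :
    ∫⁻ y, ENNReal.ofReal (exp (a * y ^ 2)) ∂gaussianReal 0 1 =
      ENNReal.ofReal (√(1 - 2 * a))⁻¹ := by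
  have hb : 0 < 1 / 2 - a := by linarith
  rw [gaussianReal_of_var_ne_zero 0 one_ne_zero,
    lintegral_withDensity_eq_lintegral_mul _ (measurable_gaussianPDF 0 1) (by fun_prop)]
  have hdens : ∀ y : ℝ, (gaussianPDF 0 1 * fun y ↦ ENNReal.ofReal (exp (a * y ^ 2))) y =
      ENNReal.ofReal ((√(2 * π))⁻¹ * exp (-(1 / 2 - a) * y ^ 2)) := by
    intro y
    simp only [Pi.mul_apply, gaussianPDF, gaussianPDFReal]
    rw [← ENNReal.ofReal_mul (by positivity), mul_assoc, ← exp_add]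
    congr 3
    · simp
    · push_cast; ring
  simp_rw [hdens]
  rw [← ofReal_integral_eq_lintegral_ofReal
      ((integrable_exp_neg_mul_sq hb).const_mul _) (ae_of_all _ fun _ ↦ by positivity),
    integral_const_mul, integral_gaussian, ← sqrt_inv, ← sqrt_inv, ← sqrt_mul (by positivity)]
  congr 2
  field_simp

theorem lintegral_pi_gaussianReal_comp_orthonormalBasis {ι : Type*} [Fintype ι]
    (b : OrthonormalBasis ι ℝ (EuclideanSpace ℝ ι)) {F : EuclideanSpace ℝ ι → ℝ≥0∞}
    (hF : Measurable F) :
    ∫⁻ x, F (∑ i, x i • b i) ∂Measure.pi (fun _ ↦ gaussianReal 0 1) =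
      ∫⁻ g, F (WithLp.toLp 2 g) ∂Measure.pi (fun _ ↦ gaussianReal 0 1) := by
  rw [← lintegral_map hF (by fun_prop), ← stdGaussian_eq_map_pi_orthonormalBasis,
    ← map_pi_eq_stdGaussian, lintegral_map hF (by fun_prop)]

theorem lintegral_exp_mul_sq_sum_sub_sum_sq (n : ℕ) {l : ℝ} (hl₁ : -(1 / 2) < l)
    (hl₂ : 2 * n * l < 1) :
    ∫⁻ g, ENNReal.ofReal (exp (l * ((∑ i, g i) ^ 2 - ∑ i, g i ^ 2)))
        ∂Measure.pi (fun _ : Fin (n + 1) ↦ gaussianReal 0 1) =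
      ENNReal.ofReal ((√(1 - 2 * n * l))⁻¹ * (√(1 + 2 * l))⁻¹ ^ n) := by
  set one : EuclideanSpace ℝ (Fin (n + 1)) := WithLp.toLp 2 fun _ ↦ 1
  have hone : ‖one‖ = √(n + 1) := by simp [one, EuclideanSpace.norm_eq]
  obtain ⟨b, hb⟩ := (EuclideanSpace.basisFun (Fin (n + 1)) ℝ).exists_apply_eq 0
    (u := (√(n + 1))⁻¹ • one) (by
      rw [norm_smul, hone, norm_inv, norm_of_nonneg (sqrt_nonneg _),
        inv_mul_cancel₀ (by positivity)])
  set F : EuclideanSpace ℝ (Fin (n + 1)) → ℝ≥0∞ :=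
    fun v ↦ ENNReal.ofReal (exp (l * (⟪one, v⟫ ^ 2 - ‖v‖ ^ 2)))
  have hF : Measurable F := by fun_prop
  have h_coord : ∀ g : Fin (n + 1) → ℝ, (∑ i, g i) ^ 2 - ∑ i, g i ^ 2 =
      ⟪one, WithLp.toLp 2 g⟫ ^ 2 - ‖WithLp.toLp 2 g‖ ^ 2 := by
    intro g
    simp [one, EuclideanSpace.inner_toLp_toLp, dotProduct, EuclideanSpace.real_norm_sq_eq]
  set c : Fin (n + 1) → ℝ := Fin.cons (n * l) fun _ ↦ -l
  have h_basis : ∀ x : Fin (n + 1) → ℝ,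
      F (∑ i, x i • b i) = ∏ i, ENNReal.ofReal (exp (c i * x i ^ 2)) := by
    intro x
    have hx : ∑ i, x i • b i = b.repr.symm (WithLp.toLp 2 x) := b.sum_repr_symm _
    have hone_b : one = √(n + 1) • b 0 := by
      rw [hb, smul_smul, mul_inv_cancel₀ (by positivity), one_smul]
    have h_inner : ⟪one, ∑ i, x i • b i⟫ = √(n + 1) * x 0 := by
      rw [hone_b, hx, real_inner_smul_left, ← b.repr_apply_apply,
        LinearIsometryEquiv.apply_symm_apply]
    have h_norm : ‖∑ i, x i • b i‖ ^ 2 = ∑ i, x i ^ 2 := by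
      rw [hx, LinearIsometryEquiv.norm_map, EuclideanSpace.real_norm_sq_eq]
    rw [← ENNReal.ofReal_prod_of_nonneg fun _ _ ↦ (exp_pos _).le, ← exp_sum]
    simp only [F, h_inner, h_norm]
    simp only [Fin.sum_univ_succ, c, Fin.cons_zero, Fin.cons_succ, mul_pow, neg_mul,
      Finset.sum_neg_distrib, ← Finset.mul_sum, sq_sqrt (by positivity : (0 : ℝ) ≤ n + 1)]
    ring
  calc _ = ∫⁻ g, F (WithLp.toLp 2 g) ∂Measure.pi (fun _ : Fin (n + 1) ↦ gaussianReal 0 1) := by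
        simp_rw [h_coord]; rfl
    _ = ∫⁻ x, F (∑ i, x i • b i) ∂Measure.pi (fun _ : Fin (n + 1) ↦ gaussianReal 0 1) :=
        (lintegral_pi_gaussianReal_comp_orthonormalBasis b hF).symm
    _ = ∏ i, ∫⁻ y, ENNReal.ofReal (exp (c i * y ^ 2)) ∂gaussianReal 0 1 := by
        simp_rw [h_basis]
        exact lintegral_fintype_prod_eq_prod _ (fun i y ↦ ENNReal.ofReal (exp (c i * y ^ 2)))
          (by fun_prop)
    _ = _ := by
        rw [Fin.prod_univ_succ]
        simp only [c, Fin.cons_zero, Fin.cons_succ, Finset.prod_const, Finset.card_univ,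
          Fintype.card_fin]
        rw [lintegral_exp_mul_sq_gaussianReal (by linarith),
          lintegral_exp_mul_sq_gaussianReal (by linarith), ← ENNReal.ofReal_pow (by positivity),
          ← ENNReal.ofReal_mul (by positivity)]
        ring

theorem lintegral_exp_mul_sum_offDiag_inner (n d : ℕ) {l : ℝ} (hl₁ : -(1 / 2) < l)
    (hl₂ : 2 * n * l < 1) :
    ∫⁻ X, ENNReal.ofReal (exp (l * ∑ ij ∈ Finset.univ.offDiag, ⟪X ij.1, X ij.2⟫))
        ∂Measure.pi (fun _ : Fin (n + 1) ↦ stdGaussian d) =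
      ENNReal.ofReal (((√(1 - 2 * n * l))⁻¹ * (√(1 + 2 * l))⁻¹ ^ n) ^ d) := by
  set T : (Fin d → Fin (n + 1) → ℝ) → Fin (n + 1) → EuclideanSpace ℝ (Fin d) :=
    fun y i ↦ WithLp.toLp 2 fun k ↦ y k i
  have h_law :
      (Measure.pi fun _ : Fin d ↦ Measure.pi fun _ : Fin (n + 1) ↦ gaussianReal 0 1).map T =
        Measure.pi fun _ : Fin (n + 1) ↦ stdGaussian d := by
    rw [← Measure.pi_pi_map_swap, Measure.map_map (by fun_prop) (by fun_prop)]
    exact (measurePreserving_pi _ _ fun _ ↦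
      (MeasurableEquiv.toLp 2 (Fin d → ℝ)).measurable.measurePreserving _).map_eq
  have h_coord : ∀ y, ∑ ij ∈ Finset.univ.offDiag, ⟪T y ij.1, T y ij.2⟫ =
      ∑ k, ((∑ i, y k i) ^ 2 - ∑ i, y k i ^ 2) := by
    intro y
    simp only [T, EuclideanSpace.inner_toLp_toLp, dotProduct, star_trivial]
    rw [Finset.sum_comm]
    refine Finset.sum_congr rfl fun k _ ↦ ?_
    rw [← Finset.sum_offDiag_mul_eq]
    exact Finset.sum_congr rfl fun _ _ ↦ mul_comm _ _
  rw [← h_law, lintegral_map (by fun_prop) (by fun_prop)]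
  simp_rw [h_coord, Finset.mul_sum, exp_sum,
    ENNReal.ofReal_prod_of_nonneg fun _ _ ↦ (exp_pos _).le]
  rw [lintegral_fintype_prod_eq_prod _
    (fun _ (g : Fin (n + 1) → ℝ) ↦ ENNReal.ofReal (exp (l * ((∑ i, g i) ^ 2 - ∑ i, g i ^ 2))))
    (by fun_prop)]
  simp_rw [lintegral_exp_mul_sq_sum_sub_sum_sq n hl₁ hl₂]
  rw [Finset.prod_const, Finset.card_univ, Fintype.card_fin, ENNReal.ofReal_pow (by positivity)]

theorem inv_sqrt_le_exp {a : ℝ} (ha : 0 < a) : (√a)⁻¹ ≤ exp ((1 - a) / (2 * a)) := by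
  have h : a⁻¹ ≤ exp ((1 - a) / a) := by
    calc a⁻¹ = (1 - a) / a + 1 := by field_simp; ring
      _ ≤ exp ((1 - a) / a) := add_one_le_exp _
  rw [← sqrt_inv, mul_comm, ← div_div, exp_half]
  exact sqrt_le_sqrt h

theorem three_quarters_le_of_abs_le (n : ℕ) {l : ℝ} (hl : |l| ≤ 1 / (8 * (n + 1))) :
    3 / 4 ≤ 1 - 2 * n * l ∧ 3 / 4 ≤ 1 + 2 * l := by
  have hn : (0 : ℝ) ≤ n := n.cast_nonneg
  rw [le_div_iff₀ (by positivity)] at hl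
  have hl₁ : |l| ≤ 1 / 8 := by nlinarith [mul_nonneg hn (abs_nonneg l)]
  have hl₂ : n * |l| ≤ 1 / 8 := by nlinarith [abs_nonneg l]
  exact ⟨by nlinarith [le_abs_self l], by linarith [neg_abs_le l]⟩

theorem inv_sqrt_mul_inv_sqrt_pow_le_exp (n : ℕ) {l : ℝ} (hl : |l| ≤ 1 / (8 * (n + 1))) :
    (√(1 - 2 * n * l))⁻¹ * (√(1 + 2 * l))⁻¹ ^ n ≤ exp (4 * (n + 1) ^ 2 * l ^ 2) := by
  have hn : (0 : ℝ) ≤ n := n.cast_nonneg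
  obtain ⟨ha, hb⟩ := three_quarters_le_of_abs_le n hl
  have hab : 1 / 2 ≤ (1 - 2 * n * l) * (1 + 2 * l) := by nlinarith
  calc (√(1 - 2 * n * l))⁻¹ * (√(1 + 2 * l))⁻¹ ^ n
      ≤ exp ((1 - (1 - 2 * n * l)) / (2 * (1 - 2 * n * l))) *
          exp ((1 - (1 + 2 * l)) / (2 * (1 + 2 * l))) ^ n := by
        gcongr <;> exact inv_sqrt_le_exp (by linarith)
    _ = exp ((1 - (1 - 2 * n * l)) / (2 * (1 - 2 * n * l)) +
          n * ((1 - (1 + 2 * l)) / (2 * (1 + 2 * l)))) := by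
        rw [← exp_nat_mul, ← exp_add]
    _ ≤ exp (4 * (n + 1) ^ 2 * l ^ 2) := by
        gcongr
        rw [mul_div_assoc', div_add_div _ _ (by linarith) (by linarith),
          div_le_iff₀ (by nlinarith)]
        nlinarith [mul_le_mul_of_nonneg_left hab
          (by positivity : (0 : ℝ) ≤ 4 * (n + 1) ^ 2 * l ^ 2), mul_nonneg hn (sq_nonneg l)]

theorem lintegral_exp_mul_sum_offDiag_inner_le (n d : ℕ) {l : ℝ}
    (hl : |l| ≤ 1 / (8 * (n + 1))) :
    ∫⁻ X, ENNReal.ofReal (exp (l * ∑ ij ∈ Finset.univ.offDiag, ⟪X ij.1, X ij.2⟫))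
        ∂Measure.pi (fun _ : Fin (n + 1) ↦ stdGaussian d) ≤
      ENNReal.ofReal (exp (4 * (n + 1) ^ 2 * d * l ^ 2)) := by
  obtain ⟨ha, hb⟩ := three_quarters_le_of_abs_le n hl
  rw [lintegral_exp_mul_sum_offDiag_inner n d (by linarith) (by linarith)]
  refine ENNReal.ofReal_le_ofReal ?_
  calc ((√(1 - 2 * n * l))⁻¹ * (√(1 + 2 * l))⁻¹ ^ n) ^ d
      ≤ exp (4 * (n + 1) ^ 2 * l ^ 2) ^ d := by
        gcongr
        exact inv_sqrt_mul_inv_sqrt_pow_le_exp n hl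
    _ = exp (4 * (n + 1) ^ 2 * d * l ^ 2) := by
        rw [← exp_nat_mul]; ring

theorem measure_ge_le_exp_mul_lintegral_exp {Ω : Type*} [MeasurableSpace Ω] (μ : Measure Ω)
    {f : Ω → ℝ} (hf : AEMeasurable f μ) (t : ℝ) {l : ℝ} (hl : 0 ≤ l) :
    μ {ω | t ≤ f ω} ≤
      ENNReal.ofReal (exp (-(l * t))) * ∫⁻ ω, ENNReal.ofReal (exp (l * f ω)) ∂μ := by
  calc μ {ω | t ≤ f ω}
      ≤ μ {ω | ENNReal.ofReal (exp (l * t)) ≤ ENNReal.ofReal (exp (l * f ω))} :=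
        measure_mono fun ω (hω : t ≤ f ω) ↦ ENNReal.ofReal_le_ofReal (by gcongr)
    _ ≤ (∫⁻ ω, ENNReal.ofReal (exp (l * f ω)) ∂μ) / ENNReal.ofReal (exp (l * t)) :=
        meas_ge_le_lintegral_div (by fun_prop) (by simp [exp_pos]) ENNReal.ofReal_ne_top
    _ = _ := by
        rw [ENNReal.div_eq_inv_mul, ← ENNReal.ofReal_inv_of_pos (exp_pos _), ← exp_neg]

theorem neg_mul_add_mul_sq_min_le {K L t : ℝ} (hK : 0 < K) (hL : 0 < L) :
    -(min (t / (2 * K)) L * t) + K * min (t / (2 * K)) L ^ 2 ≤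
      -min (t ^ 2 / (4 * K)) (L * t / 2) := by
  rcases le_total (t / (2 * K)) L with h | h
  · rw [min_eq_left h]
    have : -(t / (2 * K) * t) + K * (t / (2 * K)) ^ 2 = -(t ^ 2 / (4 * K)) := by
      field_simp; ring
    linarith [min_le_left (t ^ 2 / (4 * K)) (L * t / 2)]
  · rw [min_eq_right h]
    have : 2 * K * L ≤ t := by rwa [le_div_iff₀ (by positivity), mul_comm] at h
    nlinarith [min_le_right (t ^ 2 / (4 * K)) (L * t / 2)]

theorem measure_abs_ge_le_of_lintegral_exp_le {Ω : Type*} [MeasurableSpace Ω] {μ : Measure Ω}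
    {f : Ω → ℝ} (hf : AEMeasurable f μ) {K L : ℝ} (hK : 0 < K) (hL : 0 < L)
    (h_mgf : ∀ l, |l| ≤ L →
      ∫⁻ ω, ENNReal.ofReal (exp (l * f ω)) ∂μ ≤ ENNReal.ofReal (exp (K * l ^ 2)))
    {t : ℝ} (ht : 0 ≤ t) :
    μ {ω | t ≤ |f ω|} ≤ ENNReal.ofReal (2 * exp (-min (t ^ 2 / (4 * K)) (L * t / 2))) := by
  set l := min (t / (2 * K)) L
  have hl : 0 ≤ l := le_min (by positivity) hL.le
  have hlL : |l| ≤ L := by rw [abs_of_nonneg hl]; exact min_le_right _ _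
  have h_tail : ∀ g : Ω → ℝ, AEMeasurable g μ →
      (∀ l, |l| ≤ L →
        ∫⁻ ω, ENNReal.ofReal (exp (l * g ω)) ∂μ ≤ ENNReal.ofReal (exp (K * l ^ 2))) →
      μ {ω | t ≤ g ω} ≤ ENNReal.ofReal (exp (-(l * t) + K * l ^ 2)) := fun g hg hg_mgf ↦ by
    calc μ {ω | t ≤ g ω}
        ≤ ENNReal.ofReal (exp (-(l * t))) * ENNReal.ofReal (exp (K * l ^ 2)) :=
          (measure_ge_le_exp_mul_lintegral_exp μ hg t hl).trans (by gcongr; exact hg_mgf l hlL)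
      _ = _ := by rw [← ENNReal.ofReal_mul (exp_pos _).le, ← exp_add]
  have h_neg : ∀ l, |l| ≤ L →
      ∫⁻ ω, ENNReal.ofReal (exp (l * -f ω)) ∂μ ≤ ENNReal.ofReal (exp (K * l ^ 2)) := fun l hl ↦ by
    simpa [mul_neg, neg_mul, neg_sq] using h_mgf (-l) (by rwa [abs_neg])
  calc μ {ω | t ≤ |f ω|}
      ≤ μ {ω | t ≤ f ω} + μ {ω | t ≤ -f ω} := by
        refine (measure_mono fun ω (hω : t ≤ |f ω|) ↦ ?_).trans (measure_union_le _ _)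
        rcases abs_cases (f ω) with ⟨h, _⟩ | ⟨h, _⟩
        · exact Or.inl (by rwa [h] at hω)
        · exact Or.inr (by rwa [h] at hω)
    _ ≤ ENNReal.ofReal (exp (-(l * t) + K * l ^ 2)) +
          ENNReal.ofReal (exp (-(l * t) + K * l ^ 2)) :=
        add_le_add (h_tail f hf h_mgf) (h_tail _ hf.neg h_neg)
    _ ≤ _ := by
        rw [← ENNReal.ofReal_add (exp_pos _).le (exp_pos _).le, ← two_mul]
        gcongr
        exact neg_mul_add_mul_sq_min_le hK hL

theorem S_concentration :
    ∃ c₂ : ℝ, 0 < c₂ ∧ ∀ n d : ℕ, 2 ≤ n → 2 ≤ d → ∀ t : ℝ, 0 < t →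
      (Measure.pi fun _ : Fin n => stdGaussian d)
          {X | t ≤ |∑ ij ∈ Finset.univ.offDiag, ⟪X ij.1, X ij.2⟫|} ≤
        ENNReal.ofReal (2 * Real.exp (-c₂ *
          min (t ^ 2 / ((n : ℝ) ^ 2 * (d : ℝ))) (t / (n : ℝ)))) := by
  refine ⟨1 / 16, by norm_num, fun n d hn hd t ht ↦ ?_⟩
  obtain ⟨m, rfl⟩ : ∃ m, n = m + 1 := ⟨n - 1, by omega⟩
  refine (measure_abs_ge_le_of_lintegral_exp_le (by fun_prop) (by positivity) (by positivity)
    (fun l hl ↦ lintegral_exp_mul_sum_offDiag_inner_le m d hl) ht.le).trans ?_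
  gcongr
  rw [neg_mul, neg_le_neg_iff, mul_min_of_nonneg _ _ (by norm_num : (0 : ℝ) ≤ 1 / 16)]
  push_cast
  apply le_of_eq
  congr 1 <;> field_simp <;> ring
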